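/- arXiv:2506.11941 — 5 statements merged into one kernel-verified Lean document; each statement's English description precedes it below -/
import Mathlib

section
/- Let G be a finite abelian group and λ : G × G → ℚ/ℤ a symmetric ℤ-bilinear form which is nondegenerate. Suppose A and B are subgroups of G with A + B = G, A ∩ B = {0}, and λ vanishes identically on A and on B (λ(a,a') = 0 for all a,a' ∈ A and λ(b,b') = 0 for all b,b' ∈ B). Then the homomorphism A → Hom(B, ℚ/ℤ) sending a to the map b ↦ λ(a,b) is a group isomorphism, and likewise the homomorphism B → Hom(A, ℚ/ℤ) sending b to the map a ↦ λ(a,b) is a group isomorphism. -/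
/-- `ℚ/ℤ` as the quotient of the additive group of rationals by the integers. -/
abbrev QZ : Type := AddCircle (1 : ℚ)

open Function

/-- The natural map `ℚ/ℤ → ℝ/ℤ` induced by the inclusion `ℚ → ℝ`. -/
noncomputable def qzToReal : QZ →+ AddCircle (1 : ℝ) :=
  QuotientAddGroup.map _ _ (Rat.castHom ℝ).toAddMonoidHom (by
    intro x hx
    obtain ⟨k, hk⟩ := AddSubgroup.mem_zmultiples_iff.mp hx
    refine AddSubgroup.mem_comap.mpr (AddSubgroup.mem_zmultiples_iff.mpr ⟨k, ?_⟩)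
    subst hk
    push_cast
    simp)

lemma qzToReal_injective : Injective qzToReal := by
  intro x y
  induction x using QuotientAddGroup.induction_on with
  | H q =>
  induction y using QuotientAddGroup.induction_on with
  | H q' =>
  intro h
  have h' : ((q : ℝ) : AddCircle (1 : ℝ)) = ((q' : ℝ) : AddCircle (1 : ℝ)) := h
  rw [QuotientAddGroup.eq] at h' ⊢
  obtain ⟨k, hk⟩ := AddSubgroup.mem_zmultiples_iff.mp h'
  refine AddSubgroup.mem_zmultiples_iff.mpr ⟨k, ?_⟩
  have : ((k • (1 : ℚ) : ℚ) : ℝ) = ((-q + q' : ℚ) : ℝ) := by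
    push_cast [zsmul_eq_mul] at hk ⊢
    linarith
  exact_mod_cast this

/-- An injection from `Hom(H, ℚ/ℤ)` into the complex characters of `H`. -/
lemma exists_injective_hom_qz_addChar (H : Type*) [AddCommGroup H] :
    ∃ Φ : (H →+ QZ) → AddChar H ℂ, Injective Φ := by
  refine ⟨fun φ =>
    Circle.coeHom.compAddChar (AddCircle.toCircle_addChar.compAddMonoidHom (qzToReal.comp φ)),
    ?_⟩
  intro φ ψ h
  ext x
  have hx : ((AddCircle.toCircle (qzToReal (φ x)) : Circle) : ℂ)
      = ((AddCircle.toCircle (qzToReal (ψ x)) : Circle) : ℂ) := DFunLike.congr_fun h x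
  have h1 : AddCircle.toCircle (qzToReal (φ x)) = AddCircle.toCircle (qzToReal (ψ x)) :=
    Subtype.coe_injective hx
  exact qzToReal_injective (AddCircle.injective_toCircle one_ne_zero h1)

instance finite_hom_qz (H : Type*) [AddCommGroup H] [Finite H] : Finite (H →+ QZ) := by
  obtain ⟨Φ, hΦ⟩ := exists_injective_hom_qz_addChar H
  exact Finite.of_injective Φ hΦ

/-- The group of homomorphisms from a finite abelian group to `ℚ/ℤ` has cardinality
at most the cardinality of the group (in fact equal, but we only need `≤`). -/
lemma card_hom_qz_le (H : Type*) [AddCommGroup H] [Finite H] :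
    Nat.card (H →+ QZ) ≤ Nat.card H := by
  classical
  cases nonempty_fintype H
  obtain ⟨Φ, hΦ⟩ := exists_injective_hom_qz_addChar H
  calc Nat.card (H →+ QZ) ≤ Nat.card (AddChar H ℂ) := Nat.card_le_card_of_injective Φ hΦ
    _ = Nat.card H := by
        simp [Nat.card_eq_fintype_card, AddChar.card_eq]

/-- Hantzsche splitting (algebraic part): if a nondegenerate symmetric bilinear form
`λ : G × G → ℚ/ℤ` on a finite abelian group `G` vanishes on complementary subgroups
`A`, `B`, then `A → Hom(B, ℚ/ℤ)`, `a ↦ (b ↦ λ(a,b))`, and `B → Hom(A, ℚ/ℤ)`,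
`b ↦ (a ↦ λ(a,b))`, are group isomorphisms (i.e. these homomorphisms are bijective). -/
theorem hantzsche_dual_isomorphisms {G : Type*} [AddCommGroup G] [Fintype G]
    (lam : G →+ G →+ QZ)
    (hsymm : ∀ g h : G, lam g h = lam h g)
    (hnd : Function.Injective fun g : G => lam g)
    (A B : AddSubgroup G)
    (hsum : A ⊔ B = ⊤) (hint : A ⊓ B = ⊥)
    (hA : ∀ a ∈ A, ∀ a' ∈ A, lam a a' = 0)
    (hB : ∀ b ∈ B, ∀ b' ∈ B, lam b b' = 0) :
    Function.Bijective (fun a : A => (lam (a : G)).comp B.subtype) ∧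
    Function.Bijective (fun b : B => (lam.flip (b : G)).comp A.subtype) := by
  classical
  -- Injectivity of the first map
  have hinj1 : Function.Injective (fun a : A => (lam (a : G)).comp B.subtype) := by
    intro a a' h
    have h0 : lam ((a : G) - (a' : G)) = 0 := by
      have hker : A ⊔ B ≤ (lam ((a : G) - (a' : G))).ker := by
        rw [sup_le_iff]
        constructor
        · intro x hx
          rw [AddMonoidHom.mem_ker, map_sub, AddMonoidHom.sub_apply,
            hA _ a.2 _ hx, hA _ a'.2 _ hx, sub_zero]
        · intro x hx
          have hb : ∀ b : B, lam (a : G) (b : G) = lam (a' : G) (b : G) := fun b =>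
            DFunLike.congr_fun h b
          rw [AddMonoidHom.mem_ker, map_sub, AddMonoidHom.sub_apply, hb ⟨x, hx⟩, sub_self]
      ext g
      exact (hsum ▸ hker) (AddSubgroup.mem_top g)
    have : (a : G) - (a' : G) = 0 := by
      apply hnd
      simpa using h0
    exact Subtype.ext (sub_eq_zero.mp this)
  -- Injectivity of the second map
  have hinj2 : Function.Injective (fun b : B => (lam.flip (b : G)).comp A.subtype) := by
    intro b b' h
    have h0 : lam ((b : G) - (b' : G)) = 0 := by
      have hker : A ⊔ B ≤ (lam ((b : G) - (b' : G))).ker := by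
        rw [sup_le_iff]
        constructor
        · intro x hx
          have ha : ∀ a : A, lam.flip (b : G) (a : G) = lam.flip (b' : G) (a : G) := fun a =>
            DFunLike.congr_fun h a
          have := ha ⟨x, hx⟩
          simp only [AddMonoidHom.flip_apply] at this
          rw [AddMonoidHom.mem_ker, map_sub, AddMonoidHom.sub_apply,
            hsymm _ x, hsymm _ x, this, sub_self]
        · intro x hx
          rw [AddMonoidHom.mem_ker, map_sub, AddMonoidHom.sub_apply,
            hB _ b.2 _ hx, hB _ b'.2 _ hx, sub_zero]
      ext g
      exact (hsum ▸ hker) (AddSubgroup.mem_top g)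
    have : (b : G) - (b' : G) = 0 := by
      apply hnd
      simpa using h0
    exact Subtype.ext (sub_eq_zero.mp this)
  -- Cardinality comparisons
  have hcard1 : Nat.card A ≤ Nat.card (B →+ QZ) :=
    Nat.card_le_card_of_injective _ hinj1
  have hcard2 : Nat.card B ≤ Nat.card (A →+ QZ) :=
    Nat.card_le_card_of_injective _ hinj2
  have hAB : Nat.card A ≤ Nat.card B := hcard1.trans (card_hom_qz_le B)
  have hBA : Nat.card B ≤ Nat.card A := hcard2.trans (card_hom_qz_le A)
  have hEq1 : Nat.card A = Nat.card (B →+ QZ) :=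
    le_antisymm hcard1 ((card_hom_qz_le B).trans hBA)
  have hEq2 : Nat.card B = Nat.card (A →+ QZ) :=
    le_antisymm hcard2 ((card_hom_qz_le A).trans hAB)
  constructor
  · exact (Nat.bijective_iff_injective_and_card _).mpr ⟨hinj1, hEq1⟩
  · exact (Nat.bijective_iff_injective_and_card _).mpr ⟨hinj2, hEq2⟩
end

section
/- Let G be a finite abelian group and λ : G × G → ℚ/ℤ a symmetric ℤ-bilinear form which is nondegenerate. Suppose A and B are subgroups of G with A + B = G, A ∩ B = {0}, and λ vanishes identically on A and on B. Then |A| = |B| and |G| = |A|²; in particular the order of G is a perfect square. -/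
/-- The natural map `ℚ/ℤ → ℝ/ℤ`. -/
noncomputable def QZtoRZ : QZ →+ AddCircle (1 : ℝ) :=
  QuotientAddGroup.map _ _ (AddMonoidHom.mk' (fun q : ℚ => (q : ℝ)) (by intros; push_cast; ring))
    (by
      rintro x ⟨n, hn⟩
      refine ⟨n, ?_⟩
      simp only [zsmul_eq_mul, mul_one] at hn ⊢
      simp [← hn])

lemma QZtoRZ_injective : Function.Injective QZtoRZ := by
  rw [injective_iff_map_eq_zero]
  intro x hx
  induction x using QuotientAddGroup.induction_on with
  | H q =>
    have : ((q : ℝ) : AddCircle (1 : ℝ)) = 0 := hx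
    rw [QuotientAddGroup.eq_zero_iff] at this ⊢
    obtain ⟨n, hn⟩ := this
    refine ⟨n, ?_⟩
    simp only [zsmul_eq_mul, mul_one] at hn ⊢
    exact_mod_cast hn

/-- Embedding of `ℚ/ℤ` into `ℂ` as roots of unity. -/
noncomputable def QZtoC : QZ → ℂ := fun x => (AddCircle.toCircle (QZtoRZ x) : ℂ)

lemma QZtoC_injective : Function.Injective QZtoC := fun x y h => by
  exact QZtoRZ_injective ((AddCircle.injective_toCircle one_ne_zero) (Subtype.coe_injective h))

lemma QZtoC_zero : QZtoC 0 = 1 := by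
  simp [QZtoC, map_zero]

lemma QZtoC_add (x y : QZ) : QZtoC (x + y) = QZtoC x * QZtoC y := by
  simp only [QZtoC, map_add, AddCircle.toCircle_add]
  rfl

/-- Key counting lemma: a "nondegenerate-on-the-left" pairing `H × K → ℚ/ℤ`
forces `|H| ≤ |K|`. -/
lemma card_le_of_pairing {H K : Type*} [AddCommGroup H] [AddCommGroup K] [Finite K]
    (p : H →+ K →+ QZ) (hp : Function.Injective p) : Nat.card H ≤ Nat.card K := by
  classical
  have : Fintype K := Fintype.ofFinite K
  set Ψ : H → AddChar K ℂ := fun h =>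
    { toFun := fun k => QZtoC (p h k)
      map_zero_eq_one' := by show QZtoC ((p h) 0) = 1; rw [map_zero]; exact QZtoC_zero
      map_add_eq_mul' := fun a b => by
        show QZtoC ((p h) (a + b)) = _
        rw [map_add]; exact QZtoC_add _ _ } with hΨ
  have hΨinj : Function.Injective Ψ := by
    intro h h' hhh
    apply hp
    ext k
    exact QZtoC_injective (congrArg (fun χ : AddChar K ℂ => χ k) hhh)
  calc Nat.card H ≤ Nat.card (AddChar K ℂ) := Nat.card_le_card_of_injective Ψ hΨinj
    _ ≤ Nat.card K := by
        rw [Nat.card_eq_fintype_card, Nat.card_eq_fintype_card]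
        exact AddChar.card_addChar_le K ℂ

/-- Hantzsche's theorem, square-order conclusion: if a nondegenerate symmetric bilinear
form `λ : G × G → ℚ/ℤ` on a finite abelian group `G` vanishes on complementary subgroups
`A`, `B`, then `|A| = |B|` and `|G| = |A|²`; in particular `|G|` is a perfect square. -/
theorem hantzsche_square_order {G : Type*} [AddCommGroup G] [Fintype G]
    (lam : G →+ G →+ QZ)
    (hsymm : ∀ g h : G, lam g h = lam h g)
    (hnd : Function.Injective fun g : G => lam g)
    (A B : AddSubgroup G)
    (hsum : A ⊔ B = ⊤) (hint : A ⊓ B = ⊥)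
    (hA : ∀ a ∈ A, ∀ a' ∈ A, lam a a' = 0)
    (hB : ∀ b ∈ B, ∀ b' ∈ B, lam b b' = 0) :
    Nat.card A = Nat.card B ∧ Nat.card G = (Nat.card A) ^ 2 ∧
      ∃ n : ℕ, Nat.card G = n ^ 2 := by
  classical
  -- the key nondegeneracy step
  have key : ∀ g : G, (∀ a ∈ A, lam g a = 0) → (∀ b ∈ B, lam g b = 0) → g = 0 := by
    intro g h1 h2
    have : lam g = 0 := by
      ext x
      obtain ⟨a, ha, b, hb, rfl⟩ := AddSubgroup.mem_sup.mp
        (hsum ▸ AddSubgroup.mem_top x : x ∈ A ⊔ B)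
      rw [map_add, h1 a ha, h2 b hb, add_zero]
      rfl
    have h0 : lam g = lam 0 := by rw [this, map_zero]
    exact hnd h0
  -- pairing B × A → QZ
  set pBA : B →+ (A →+ QZ) := AddMonoidHom.mk'
      (fun b => (lam (b : G)).comp A.subtype)
      (by intro x y; ext a; simp) with hpBA
  have hBA : Function.Injective pBA := by
    rw [injective_iff_map_eq_zero]
    intro b hb
    have h1 : ∀ a ∈ A, lam (b : G) a = 0 := by
      intro a ha
      exact congrArg (fun f : A →+ QZ => f ⟨a, ha⟩) hb
    have h2 : ∀ b' ∈ B, lam (b : G) b' = 0 := fun b' hb' => hB _ b.2 _ hb'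
    exact Subtype.ext (key _ h1 h2)
  set pAB : A →+ (B →+ QZ) := AddMonoidHom.mk'
      (fun a => (lam (a : G)).comp B.subtype)
      (by intro x y; ext b; simp) with hpAB
  have hAB : Function.Injective pAB := by
    rw [injective_iff_map_eq_zero]
    intro a ha
    have h2 : ∀ b ∈ B, lam (a : G) b = 0 := by
      intro b hb
      exact congrArg (fun f : B →+ QZ => f ⟨b, hb⟩) ha
    have h1 : ∀ a' ∈ A, lam (a : G) a' = 0 := fun a' ha' => hA _ a.2 _ ha'
    exact Subtype.ext (key _ h1 h2)
  have hle1 : Nat.card B ≤ Nat.card A := card_le_of_pairing pBA hBA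
  have hle2 : Nat.card A ≤ Nat.card B := card_le_of_pairing pAB hAB
  have hcardeq : Nat.card A = Nat.card B := le_antisymm hle2 hle1
  -- |G| = |A| * |B|
  have hbij : Function.Bijective (fun x : A × B => (x.1 : G) + (x.2 : G)) := by
    constructor
    · rintro ⟨a, b⟩ ⟨a', b'⟩ h
      simp only at h
      have hab : (a : G) - a' = (b' : G) - b := by
        rw [sub_eq_sub_iff_add_eq_add]
        rw [h, add_comm]
      have hmem : (a : G) - a' ∈ A ⊓ B := by
        refine AddSubgroup.mem_inf.mpr ⟨sub_mem a.2 a'.2, ?_⟩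
        rw [hab]; exact sub_mem b'.2 b.2
      rw [hint, AddSubgroup.mem_bot, sub_eq_zero] at hmem
      have hb : (b' : G) - b = 0 := by rw [← hab, hmem, sub_self]
      rw [sub_eq_zero] at hb
      exact Prod.ext (Subtype.ext hmem) (Subtype.ext hb.symm)
    · intro g
      obtain ⟨a, ha, b, hb, rfl⟩ := AddSubgroup.mem_sup.mp
        (hsum ▸ AddSubgroup.mem_top g : g ∈ A ⊔ B)
      exact ⟨(⟨a, ha⟩, ⟨b, hb⟩), rfl⟩
  have hG : Nat.card G = Nat.card A * Nat.card B := by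
    rw [← Nat.card_prod]
    exact (Nat.card_eq_of_bijective _ hbij).symm
  refine ⟨hcardeq, ?_, ?_⟩
  · rw [hG, ← hcardeq, sq]
  · exact ⟨Nat.card A, by rw [hG, ← hcardeq, sq]⟩
end

section
/- There are exactly 32 Lagrangians L ⊆ V = 𝔽₃^6 such that the projection V → 𝔽₃^3 onto the first three coordinates does NOT restrict to a linear isomorphism on L; equivalently, the total number of Lagrangians in V is 80. -/
/-- `V = 𝔽₃⁶`. -/
abbrev V3 : Type := Fin 6 → ZMod 3

/-- The symmetric bilinear form `b(x,y) = x₀y₀ + x₁y₁ + x₂y₂ − x₃y₃ − x₄y₄ − x₅y₅`. -/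
def bform (x y : V3) : ZMod 3 :=
  x 0 * y 0 + x 1 * y 1 + x 2 * y 2 - x 3 * y 3 - x 4 * y 4 - x 5 * y 5

/-- A Lagrangian: a 3-dimensional subspace of `V = 𝔽₃⁶` on which `b` vanishes. -/
def IsLagrangian (L : Submodule (ZMod 3) V3) : Prop :=
  Module.finrank (ZMod 3) L = 3 ∧ ∀ x ∈ L, ∀ y ∈ L, bform x y = 0

/-- The projection of `V = 𝔽₃⁶` onto the first three coordinates. -/
def proj3 (x : V3) : Fin 3 → ZMod 3 := fun i => x (Fin.castLE (by omega) i)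

/-!
A Lagrangian `L` on which `proj3` is bijective is the graph of a `3 × 3` matrix: it is spanned by
the vectors `(eⱼ, mⱼ)`, `mⱼ` the columns, and it is isotropic exactly when these columns are
orthonormal; there are `48 = |O₃(𝔽₃)|` such matrices. Otherwise `L` meets `0 × 𝔽₃³` in a nonzero
isotropic vector; as a sum of three squares in `𝔽₃` vanishes only when all or none of its terms
do, that vector spans one of the four lines through `z = (0, 0, 0, 1, s, t)`, `s, t = ±1`. No two
of these lines are orthogonal, so `L` contains exactly one of them. A Lagrangian through `z` is
spanned by `z`, `(1, 0, a, c, 0, -t c)` and `(0, 1, b, d, 0, -t d)`, where the columns of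
`[a b; c d]` are orthogonal of square norm `-1`; there are `8` such matrices. Hence there are
`4 · 8 = 32` degenerate Lagrangians and `48 + 32 = 80` in all.
-/

open Module Submodule Set

section DualFamily

variable {K M ι : Type*} [Field K] [AddCommGroup M] [Module K M] [Fintype ι] [DecidableEq ι]
  {g : ι → M} {φ : ι → Dual K M}

theorem Submodule.sum_dual_smul_eq_of_mem_span (hφ : ∀ i j, φ i (g j) = if i = j then 1 else 0)
    {x : M} (hx : x ∈ span K (range g)) : ∑ i, φ i x • g i = x := by
  obtain ⟨c, rfl⟩ := (mem_span_range_iff_exists_fun K).mp hx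
  simp [hφ]

theorem LinearIndependent.of_dual_apply_eq_ite
    (hφ : ∀ i j, φ i (g j) = if i = j then 1 else 0) : LinearIndependent K g := by
  rw [Fintype.linearIndependent_iff]
  intro c hc i
  simpa [hφ] using congrArg (φ i) hc

theorem Submodule.span_range_eq_of_forall_mem [FiniteDimensional K M]
    (hφ : ∀ i j, φ i (g j) = if i = j then 1 else 0) {L : Submodule K M}
    (hL : finrank K L = Fintype.card ι) (hg : ∀ j, g j ∈ L) : span K (range g) = L :=
  eq_of_le_of_finrank_eq (span_le.mpr (range_subset_iff.mpr hg))
    (by rw [finrank_span_eq_card (.of_dual_apply_eq_ite hφ), hL])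

theorem Submodule.natCard_eq_of_span_parametrization [FiniteDimensional K M] {P : Type*}
    {C : P → Prop} {S : Submodule K M → Prop} {g : P → ι → M}
    (hφ : ∀ p i j, φ i (g p j) = if i = j then 1 else 0) (hg : Function.Injective g)
    (hdim : ∀ L, S L → finrank K L = Fintype.card ι)
    (hspan : ∀ p, C p → S (span K (range (g p))))
    (hmem : ∀ L, S L → ∃ p, C p ∧ ∀ j, g p j ∈ L) :
    Nat.card {L // S L} = Nat.card {p // C p} := by
  refine (Nat.card_eq_of_bijective (fun p => ⟨_, hspan p.1 p.2⟩) ⟨?_, ?_⟩).symm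
  · rintro ⟨p, _⟩ ⟨q, _⟩ hpq
    refine Subtype.ext (hg (funext fun j => ?_))
    have hspan_eq : span K (range (g p)) = span K (range (g q)) := congrArg Subtype.val hpq
    have hj : g p j ∈ span K (range (g q)) := hspan_eq ▸ subset_span (mem_range_self j)
    calc g p j = ∑ i, φ i (g p j) • g q i := (sum_dual_smul_eq_of_mem_span (hφ q) hj).symm
      _ = g q j := by simp [hφ p]
  · rintro ⟨L, hL⟩
    obtain ⟨p, hp, hpL⟩ := hmem L hL
    exact ⟨⟨p, hp⟩, Subtype.ext (span_range_eq_of_forall_mem (hφ p) (hdim L hL) hpL)⟩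

end DualFamily

theorem LinearMap.BilinForm.apply_eq_zero_of_mem_span {K M : Type*} [CommSemiring K]
    [AddCommMonoid M] [Module K M] {B : LinearMap.BilinForm K M} {s : Set M}
    (h : ∀ a ∈ s, ∀ b ∈ s, B a b = 0) {x y : M} (hx : x ∈ span K s) (hy : y ∈ span K s) :
    B x y = 0 :=
  span_induction₂ (p := fun x y _ _ => B x y = 0) (fun a b ha hb => h a ha b hb) (by simp) (by simp)
    (by intros; simp_all) (by intros; simp_all) (by intros; simp_all) (by intros; simp_all) hx hy

theorem Nat.card_subtype_eq_card_and_add_card_and_not {α : Type*} [Finite α] (p q : α → Prop) :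
    Nat.card {x // p x} = Nat.card {x // p x ∧ q x} + Nat.card {x // p x ∧ ¬ q x} := by
  classical
  rw [← Nat.card_congr (Equiv.subtypeSubtypeEquivSubtypeInter p q),
    ← Nat.card_congr (Equiv.subtypeSubtypeEquivSubtypeInter p fun x => ¬ q x), ← Nat.card_sum]
  exact Nat.card_congr (Equiv.sumCompl _).symm

namespace LagrangianCount

def bformBilin : LinearMap.BilinForm (ZMod 3) V3 :=
  LinearMap.mk₂ (ZMod 3) bform
    (fun _ _ _ => by simp only [bform, Pi.add_apply]; ring)
    (fun _ _ _ => by simp only [bform, Pi.smul_apply, smul_eq_mul]; ring)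
    (fun _ _ _ => by simp only [bform, Pi.add_apply]; ring)
    (fun _ _ _ => by simp only [bform, Pi.smul_apply, smul_eq_mul]; ring)

theorem isLagrangian_span {g : Fin 3 → V3} {φ : Fin 3 → Dual (ZMod 3) V3}
    (hφ : ∀ i j, φ i (g j) = if i = j then 1 else 0) (h : ∀ i j, bform (g i) (g j) = 0) :
    IsLagrangian (span (ZMod 3) (range g)) := by
  refine ⟨by simpa using finrank_span_eq_card (.of_dual_apply_eq_ite hφ), fun x hx y hy => ?_⟩
  refine bformBilin.apply_eq_zero_of_mem_span (s := range g) ?_ hx hy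
  rintro _ ⟨i, rfl⟩ _ ⟨j, rfl⟩
  exact h i j

abbrev Vec3 := ZMod 3 × ZMod 3 × ZMod 3

def dot3 (u v : Vec3) : ZMod 3 := u.1 * v.1 + u.2.1 * v.2.1 + u.2.2 * v.2.2

theorem dot3_comm (u v : Vec3) : dot3 u v = dot3 v u := by
  simp only [dot3]; ring

abbrev Frame := Vec3 × Vec3 × Vec3

def col (m : Frame) : Fin 3 → Vec3 := ![m.1, m.2.1, m.2.2]

def IsOrthonormal (m : Frame) : Prop :=
  dot3 m.1 m.1 = 1 ∧ dot3 m.2.1 m.2.1 = 1 ∧ dot3 m.2.2 m.2.2 = 1 ∧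
    dot3 m.1 m.2.1 = 0 ∧ dot3 m.1 m.2.2 = 0 ∧ dot3 m.2.1 m.2.2 = 0

instance : DecidablePred IsOrthonormal := fun _ => by unfold IsOrthonormal; infer_instance

def graphGen (m : Frame) : Fin 3 → V3 :=
  ![![1, 0, 0, m.1.1, m.1.2.1, m.1.2.2], ![0, 1, 0, m.2.1.1, m.2.1.2.1, m.2.1.2.2],
    ![0, 0, 1, m.2.2.1, m.2.2.2.1, m.2.2.2.2]]

def proj3Dual (i : Fin 3) : Dual (ZMod 3) V3 := LinearMap.proj (Fin.castLE (by omega) i)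

theorem proj3Dual_graphGen (m : Frame) (i j : Fin 3) :
    proj3Dual i (graphGen m j) = if i = j then 1 else 0 := by
  fin_cases i <;> fin_cases j <;> rfl

theorem eq_of_proj3_eq {x y : V3} (h : proj3 x = proj3 y) (h₃ : x 3 = y 3) (h₄ : x 4 = y 4)
    (h₅ : x 5 = y 5) : x = y := by
  funext k
  fin_cases k
  exacts [congrFun h 0, congrFun h 1, congrFun h 2, h₃, h₄, h₅]

theorem proj3_graphGen (m : Frame) (j : Fin 3) : proj3 (graphGen m j) = Pi.single j 1 := by
  funext i
  rw [Pi.single_apply]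
  exact proj3Dual_graphGen m i j

theorem graphGen_injective : Function.Injective graphGen := by
  rintro ⟨⟨_, _, _⟩, ⟨_, _, _⟩, ⟨_, _, _⟩⟩ ⟨⟨_, _, _⟩, ⟨_, _, _⟩, ⟨_, _, _⟩⟩ h
  simp only [graphGen, Matrix.vecCons_inj, and_true, true_and] at h
  simp [h]

theorem bform_graphGen (m : Frame) (i j : Fin 3) :
    bform (graphGen m i) (graphGen m j) = (if i = j then 1 else 0) - dot3 (col m i) (col m j) := by
  fin_cases i <;> fin_cases j <;>
    simp only [Fin.zero_eta, Fin.mk_one, Fin.reduceFinMk, Fin.reduceEq, ↓reduceIte, Matrix.cons_val,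
      Matrix.cons_val', bform, graphGen, col, dot3] <;>
    ring

theorem isOrthonormal_iff {m : Frame} :
    IsOrthonormal m ↔ ∀ i j, bform (graphGen m i) (graphGen m j) = 0 := by
  have hdot : ∀ i j, bform (graphGen m i) (graphGen m j) = 0 ↔
      dot3 (col m i) (col m j) = if i = j then 1 else 0 := fun i j => by
    rw [bform_graphGen, sub_eq_zero, eq_comm]
  simp only [hdot]
  constructor
  · rintro ⟨h₀₀, h₁₁, h₂₂, h₀₁, h₀₂, h₁₂⟩ i j
    fin_cases i <;> fin_cases j <;> simp [col, dot3_comm, *]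
  · intro h
    exact ⟨h 0 0, h 1 1, h 2 2, h 0 1, h 0 2, h 1 2⟩

theorem bijective_proj3_span_graphGen (m : Frame) :
    Function.Bijective fun x : span (ZMod 3) (range (graphGen m)) => proj3 (x : V3) := by
  constructor
  · rintro ⟨x, hx⟩ ⟨y, hy⟩ hxy
    rw [Subtype.mk.injEq, ← sum_dual_smul_eq_of_mem_span (proj3Dual_graphGen m) hx,
      ← sum_dual_smul_eq_of_mem_span (proj3Dual_graphGen m) hy]
    exact congrArg (fun u => ∑ i, u i • graphGen m i) hxy
  · intro u
    refine ⟨⟨∑ i, u i • graphGen m i,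
      sum_mem fun i _ => smul_mem _ _ (subset_span (mem_range_self i))⟩, ?_⟩
    funext k
    fin_cases k <;> simp [proj3, graphGen, Fin.sum_univ_three]

theorem exists_graphGen_mem {L : Submodule (ZMod 3) V3} (hL : IsLagrangian L)
    (hbij : Function.Bijective fun x : L => proj3 (x : V3)) :
    ∃ m : Frame, IsOrthonormal m ∧ ∀ j, graphGen m j ∈ L := by
  choose X hX using fun j : Fin 3 => hbij.2 (Pi.single j 1)
  let m : Frame := (((X 0 : V3) 3, (X 0 : V3) 4, (X 0 : V3) 5),
    ((X 1 : V3) 3, (X 1 : V3) 4, (X 1 : V3) 5), ((X 2 : V3) 3, (X 2 : V3) 4, (X 2 : V3) 5))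
  have hgen : ∀ j, graphGen m j = X j := fun j =>
    eq_of_proj3_eq ((proj3_graphGen m j).trans (hX j).symm) (by fin_cases j <;> rfl)
      (by fin_cases j <;> rfl) (by fin_cases j <;> rfl)
  refine ⟨m, isOrthonormal_iff.mpr fun i j => ?_, fun j => hgen j ▸ (X j).2⟩
  rw [hgen, hgen]
  exact hL.2 _ (X i).2 _ (X j).2

theorem card_isOrthonormal : Nat.card {m : Frame // IsOrthonormal m} = 48 := by
  rw [Nat.card_eq_fintype_card]
  decide +kernel

theorem card_lagrangian_bijective_proj3 :
    Nat.card {L : Submodule (ZMod 3) V3 //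
      IsLagrangian L ∧ Function.Bijective fun x : L => proj3 (x : V3)} = 48 := by
  rw [← card_isOrthonormal]
  exact natCard_eq_of_span_parametrization (φ := proj3Dual)
    (S := fun L => IsLagrangian L ∧ Function.Bijective fun x : L => proj3 (x : V3))
    proj3Dual_graphGen graphGen_injective (fun L hL => by simpa using hL.1.1)
    (fun m hm => ⟨isLagrangian_span (proj3Dual_graphGen m) (isOrthonormal_iff.mp hm),
      bijective_proj3_span_graphGen m⟩)
    (fun L hL => exists_graphGen_mem hL.1 hL.2)

theorem units_mul_self (s : (ZMod 3)ˣ) : (s : ZMod 3) * s = 1 := by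
  rw [← Units.val_mul, ← sq, ZMod.units_pow_card_sub_one_eq_one 3 s, Units.val_one]

def isoVec (s t : (ZMod 3)ˣ) : V3 := ![0, 0, 0, 1, s, t]

theorem exists_smul_eq_isoVec_of_isotropic : ∀ u : V3, u 0 = 0 → u 1 = 0 → u 2 = 0 → u ≠ 0 →
    bform u u = 0 → ∃ s t : (ZMod 3)ˣ, ∃ c : ZMod 3, c • u = isoVec s t := by
  decide +kernel

theorem eq_of_bform_isoVec_eq_zero : ∀ s t s' t' : (ZMod 3)ˣ,
    bform (isoVec s t) (isoVec s' t') = 0 → s = s' ∧ t = t' := by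
  decide

-- Under these hypotheses `bform x x = x₂² + (x₃ - s x₄)²`, and `-1` is not a square in `𝔽₃`.
theorem exists_smul_isoVec_eq_of_isotropic_of_perp :
    ∀ (s t : (ZMod 3)ˣ) (x : V3), x 0 = 0 → x 1 = 0 → bform x x = 0 →
      bform x (isoVec s t) = 0 → ∃ c : ZMod 3, c • isoVec s t = x := by
  decide +kernel

abbrev Quad := ZMod 3 × ZMod 3 × ZMod 3 × ZMod 3

def IsNegOrthonormalPair (p : Quad) : Prop :=
  1 + p.1 * p.1 + p.2.2.1 * p.2.2.1 = 0 ∧ p.1 * p.2.1 + p.2.2.1 * p.2.2.2 = 0 ∧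
    1 + p.2.1 * p.2.1 + p.2.2.2 * p.2.2.2 = 0

instance : DecidablePred IsNegOrthonormalPair := fun _ => by
  unfold IsNegOrthonormalPair; infer_instance

theorem card_isNegOrthonormalPair : Nat.card {p : Quad // IsNegOrthonormalPair p} = 8 := by
  rw [Nat.card_eq_fintype_card]
  decide

def perpRow (t : (ZMod 3)ˣ) (x₀ x₁ x₂ c : ZMod 3) : V3 := ![x₀, x₁, x₂, c, 0, -(t * c)]

def lineGen (s t : (ZMod 3)ˣ) (p : Quad) : Fin 3 → V3 :=
  ![perpRow t 1 0 p.1 p.2.2.1, perpRow t 0 1 p.2.1 p.2.2.2, isoVec s t]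

-- `perpRow` vanishes at coordinate 4, so `s • x₄` reads off the coefficient of `isoVec s t`.
def lineDual (s : (ZMod 3)ˣ) : Fin 3 → Dual (ZMod 3) V3 :=
  ![LinearMap.proj 0, LinearMap.proj 1, (s : ZMod 3) • LinearMap.proj 4]

variable {s t : (ZMod 3)ˣ}

theorem lineDual_lineGen (p : Quad) (i j : Fin 3) :
    lineDual s i (lineGen s t p j) = if i = j then 1 else 0 := by
  fin_cases i <;> fin_cases j <;> simp [lineDual, lineGen, perpRow, isoVec, units_mul_self]

theorem lineGen_injective : Function.Injective (lineGen s t) := by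
  rintro ⟨a, b, c, d⟩ ⟨a', b', c', d'⟩ h
  have ha : a = a' := congrFun (congrFun h 0) 2
  have hb : b = b' := congrFun (congrFun h 1) 2
  have hc : c = c' := congrFun (congrFun h 0) 3
  have hd : d = d' := congrFun (congrFun h 1) 3
  rw [ha, hb, hc, hd]

theorem bform_comm (x y : V3) : bform x y = bform y x := by
  simp only [bform]; ring

theorem bform_perpRow (x₀ x₁ x₂ c y₀ y₁ y₂ d : ZMod 3) :
    bform (perpRow t x₀ x₁ x₂ c) (perpRow t y₀ y₁ y₂ d) = x₀ * y₀ + x₁ * y₁ + x₂ * y₂ + c * d := by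
  have h₃ : (3 : ZMod 3) = 0 := rfl
  simp only [bform, perpRow, Matrix.cons_val]
  linear_combination (-(c * d)) * units_mul_self t - (c * d) * h₃

theorem bform_perpRow_isoVec (x₀ x₁ x₂ c : ZMod 3) :
    bform (perpRow t x₀ x₁ x₂ c) (isoVec s t) = 0 := by
  simp only [bform, perpRow, isoVec, Matrix.cons_val]
  linear_combination c * units_mul_self t

theorem bform_isoVec_self : bform (isoVec s t) (isoVec s t) = 0 := by
  have h₃ : (3 : ZMod 3) = 0 := rfl
  simp only [bform, isoVec, Matrix.cons_val]
  linear_combination -units_mul_self s - units_mul_self t - h₃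

theorem isNegOrthonormalPair_iff {p : Quad} :
    IsNegOrthonormalPair p ↔ ∀ i j, bform (lineGen s t p i) (lineGen s t p j) = 0 := by
  simp [Fin.forall_fin_succ, lineGen, IsNegOrthonormalPair, bform_perpRow, bform_perpRow_isoVec,
    bform_comm (isoVec s t), bform_isoVec_self, mul_comm, and_assoc]

theorem perpRow_eq_sub {x : V3} (hx : bform x (isoVec s t) = 0) :
    perpRow t (x 0) (x 1) (x 2) (x 3 - s * x 4) = x - (s * x 4) • isoVec s t := by
  have h₃ : (3 : ZMod 3) = 0 := rfl
  have hx' : x 3 + s * x 4 + t * x 5 = 0 := by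
    simp only [bform, isoVec, Matrix.cons_val] at hx
    linear_combination -hx
  funext k
  fin_cases k <;>
    simp only [Fin.zero_eta, Fin.mk_one, Fin.reduceFinMk, perpRow, isoVec, Pi.sub_apply,
      Pi.smul_apply, smul_eq_mul, Matrix.cons_val, mul_zero, mul_one, sub_zero]
  · linear_combination x 4 * units_mul_self s
  · linear_combination (-t) * hx' + x 5 * units_mul_self t + s * t * x 4 * h₃

theorem exists_mem_apply_zero_eq_apply_one_eq {L : Submodule (ZMod 3) V3} (hL : IsLagrangian L)
    (hz : isoVec s t ∈ L) (a b : ZMod 3) : ∃ x ∈ L, x 0 = a ∧ x 1 = b := by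
  let f : L →ₗ[ZMod 3] ZMod 3 × ZMod 3 :=
    ((LinearMap.proj 0).prod (LinearMap.proj 1)).comp L.subtype
  have hker : LinearMap.ker f ≤ span (ZMod 3) {⟨isoVec s t, hz⟩} := by
    intro x hx
    have h₀ : (x : V3) 0 = 0 := congrArg Prod.fst (LinearMap.mem_ker.mp hx)
    have h₁ : (x : V3) 1 = 0 := congrArg Prod.snd (LinearMap.mem_ker.mp hx)
    obtain ⟨c, hc⟩ := exists_smul_isoVec_eq_of_isotropic_of_perp s t x h₀ h₁ (hL.2 _ x.2 _ x.2)
      (hL.2 _ x.2 _ hz)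
    exact mem_span_singleton.mpr ⟨c, Subtype.ext hc⟩
  have hker_le : finrank (ZMod 3) (LinearMap.ker f) ≤ 1 :=
    (finrank_mono hker).trans (by simpa using finrank_span_le_card ({⟨isoVec s t, hz⟩} : Set L))
  have hrank := f.finrank_range_add_finrank_ker
  have hrange_le := (LinearMap.range f).finrank_le
  rw [hL.1] at hrank
  simp only [finrank_prod, finrank_self] at hrange_le
  have htop : LinearMap.range f = ⊤ :=
    eq_top_of_finrank_eq (by simp only [finrank_prod, finrank_self]; omega)
  obtain ⟨x, hx⟩ := LinearMap.range_eq_top.mp htop (a, b)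
  exact ⟨x, x.2, congrArg Prod.fst hx, congrArg Prod.snd hx⟩

theorem exists_lineGen_mem {L : Submodule (ZMod 3) V3} (hL : IsLagrangian L)
    (hz : isoVec s t ∈ L) : ∃ p, IsNegOrthonormalPair p ∧ ∀ j, lineGen s t p j ∈ L := by
  obtain ⟨x, hx, hx₀, hx₁⟩ := exists_mem_apply_zero_eq_apply_one_eq hL hz 1 0
  obtain ⟨y, hy, hy₀, hy₁⟩ := exists_mem_apply_zero_eq_apply_one_eq hL hz 0 1
  have hxrow := perpRow_eq_sub (hL.2 _ hx _ hz)
  have hyrow := perpRow_eq_sub (hL.2 _ hy _ hz)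
  rw [hx₀, hx₁] at hxrow
  rw [hy₀, hy₁] at hyrow
  have hgen : ∀ j, lineGen s t (x 2, y 2, x 3 - s * x 4, y 3 - s * y 4) j ∈ L := by
    intro j
    fin_cases j
    · show perpRow t 1 0 (x 2) (x 3 - s * x 4) ∈ L
      exact hxrow ▸ L.sub_mem hx (L.smul_mem _ hz)
    · show perpRow t 0 1 (y 2) (y 3 - s * y 4) ∈ L
      exact hyrow ▸ L.sub_mem hy (L.smul_mem _ hz)
    · exact hz
  exact ⟨_, isNegOrthonormalPair_iff.mpr fun i j => hL.2 _ (hgen i) _ (hgen j), hgen⟩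

theorem card_lagrangian_mem_isoVec (s t : (ZMod 3)ˣ) :
    Nat.card {L : Submodule (ZMod 3) V3 // IsLagrangian L ∧ isoVec s t ∈ L} = 8 := by
  rw [← card_isNegOrthonormalPair]
  exact natCard_eq_of_span_parametrization (φ := lineDual s)
    (S := fun L => IsLagrangian L ∧ isoVec s t ∈ L) lineDual_lineGen lineGen_injective
    (fun L hL => by simpa using hL.1.1)
    (fun p hp => ⟨isLagrangian_span (lineDual_lineGen p) (isNegOrthonormalPair_iff.mp hp),
      subset_span (mem_range_self 2)⟩)
    (fun L hL => exists_lineGen_mem hL.1 hL.2)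

theorem not_bijective_proj3_of_isoVec_mem {L : Submodule (ZMod 3) V3}
    (hz : isoVec s t ∈ L) : ¬ Function.Bijective fun x : L => proj3 (x : V3) := by
  intro hbij
  have h : (⟨isoVec s t, hz⟩ : L) = 0 := hbij.1 (by funext i; fin_cases i <;> rfl)
  simpa [isoVec] using congrFun (congrArg Subtype.val h) 3

theorem exists_isoVec_mem {L : Submodule (ZMod 3) V3} (hL : IsLagrangian L)
    (hnb : ¬ Function.Bijective fun x : L => proj3 (x : V3)) : ∃ s t, isoVec s t ∈ L := by
  let f : L →ₗ[ZMod 3] Fin 3 → ZMod 3 :=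
    (LinearMap.funLeft _ _ (Fin.castLE (by omega))).comp L.subtype
  have hninj : ¬ Function.Injective f := fun hinj =>
    hnb ⟨hinj, (LinearMap.injective_iff_surjective_of_finrank_eq_finrank
      (by simpa using hL.1)).mp hinj⟩
  obtain ⟨u, hu, hu0⟩ : ∃ u : L, f u = 0 ∧ u ≠ 0 := by
    simpa [injective_iff_map_eq_zero] using hninj
  obtain ⟨s, t, c, hc⟩ := exists_smul_eq_isoVec_of_isotropic u (congrFun hu 0) (congrFun hu 1)
    (congrFun hu 2) (by simpa using hu0) (hL.2 _ u.2 _ u.2)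
  exact ⟨s, t, hc ▸ L.smul_mem c u.2⟩

theorem card_lagrangian_not_bijective_proj3 :
    Nat.card {L : Submodule (ZMod 3) V3 //
      IsLagrangian L ∧ ¬ Function.Bijective fun x : L => proj3 (x : V3)} = 32 := by
  let e : (Σ st : (ZMod 3)ˣ × (ZMod 3)ˣ,
      {L : Submodule (ZMod 3) V3 // IsLagrangian L ∧ isoVec st.1 st.2 ∈ L}) →
      {L : Submodule (ZMod 3) V3 //
        IsLagrangian L ∧ ¬ Function.Bijective fun x : L => proj3 (x : V3)} :=
    fun x => ⟨x.2.1, x.2.2.1, not_bijective_proj3_of_isoVec_mem x.2.2.2⟩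
  have he : Function.Bijective e := by
    constructor
    · rintro ⟨⟨s, t⟩, L, hL, hz⟩ ⟨⟨s', t'⟩, L', hL', hz'⟩ h
      obtain rfl : L = L' := congrArg Subtype.val h
      obtain ⟨rfl, rfl⟩ := eq_of_bform_isoVec_eq_zero s t s' t' (hL.2 _ hz _ hz')
      rfl
    · rintro ⟨L, hL, hnb⟩
      obtain ⟨s, t, hz⟩ := exists_isoVec_mem hL hnb
      exact ⟨⟨(s, t), L, hL, hz⟩, rfl⟩
  rw [← Nat.card_eq_of_bijective e he, Nat.card_sigma]
  simp [card_lagrangian_mem_isoVec, Nat.totient_prime Nat.prime_three]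

theorem card_lagrangian : Nat.card {L : Submodule (ZMod 3) V3 // IsLagrangian L} = 80 := by
  rw [Nat.card_subtype_eq_card_and_add_card_and_not _
      fun L : Submodule (ZMod 3) V3 => Function.Bijective fun x : L => proj3 (x : V3),
    card_lagrangian_bijective_proj3, card_lagrangian_not_bijective_proj3]

end LagrangianCount

/-- There are exactly 32 Lagrangians `L ⊆ 𝔽₃⁶` on which the projection onto the first
three coordinates does NOT restrict to a linear isomorphism; equivalently, the total
number of Lagrangians is 80. -/
theorem count_lagrangians_degenerate_left_block :
    Nat.card {L : Submodule (ZMod 3) V3 //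
      IsLagrangian L ∧ ¬ Function.Bijective fun x : L => proj3 (x : V3)} = 32 ∧
    Nat.card {L : Submodule (ZMod 3) V3 // IsLagrangian L} = 80 :=
  ⟨LagrangianCount.card_lagrangian_not_bijective_proj3, LagrangianCount.card_lagrangian⟩
end

section
/- Let L ⊆ 𝔽₃^6 be the span of the rows (0,0,0,1,1,1), (0,1,−1,0,1,−1), (1,1,1,0,0,0) and let L' ⊆ 𝔽₃^6 be the span of the rows (0,0,0,−1,1,1), (0,1,−1,0,−1,1), (−1,1,1,0,0,0). Then L and L' are Lagrangians, L ∩ L' = {0} (so {L, L'} is a dual pair), and the alternating trilinear form given by the determinant of the first three columns (i.e., Φ_v for v = (1,0,…,0)) vanishes on both L and L'. -/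
/-- The twenty 3-element subsets of `{0,…,5}`, in lexicographic order, each listed
as its elements in increasing order. -/
def triples : Fin 20 → Fin 3 → Fin 6 :=
  ![![0,1,2], ![0,1,3], ![0,1,4], ![0,1,5], ![0,2,3], ![0,2,4], ![0,2,5],
    ![0,3,4], ![0,3,5], ![0,4,5], ![1,2,3], ![1,2,4], ![1,2,5], ![1,3,4],
    ![1,3,5], ![1,4,5], ![2,3,4], ![2,3,5], ![2,4,5], ![3,4,5]]

/-- The alternating trilinear form `Φ_v(r₁,r₂,r₃) = Σᵢ vᵢ · det Mᵢ`, where `Mᵢ` is the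
3×3 submatrix of the 3×6 matrix with rows `r₁,r₂,r₃` formed by the columns of the
`i`-th 3-element subset `Sᵢ` of `{0,…,5}` (lexicographic order). -/
def Phi (v : Fin 20 → ZMod 3) (x y z : V3) : ZMod 3 :=
  ∑ i : Fin 20,
    v i * Matrix.det (Matrix.of ![x ∘ triples i, y ∘ triples i, z ∘ triples i])

/-- The coefficient vector `(1,0,…,0)`, so `Φ_{(1,0,…,0)}` is the determinant of the
first three columns. -/
def vdet : Fin 20 → ZMod 3 := ![1,0,0,0,0,0,0,0,0,0,0,0,0,0,0,0,0,0,0,0]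

lemma mem_span3 (v1 v2 v3 x : V3) :
    x ∈ Submodule.span (ZMod 3) {v1, v2, v3} ↔
      ∃ a b c : ZMod 3, x = a • v1 + b • v2 + c • v3 := by
  simp only [Submodule.mem_span_insert, Submodule.mem_span_singleton]
  constructor
  · rintro ⟨a, z, ⟨b, w, ⟨c, rfl⟩, rfl⟩, rfl⟩; exact ⟨a, b, c, by abel⟩
  · rintro ⟨a, b, c, rfl⟩; exact ⟨a, _, ⟨b, _, ⟨c, rfl⟩, rfl⟩, by abel⟩

lemma Phi_vdet (x y z : V3) :
    Phi vdet x y z = x 0 * (y 1 * z 2 - y 2 * z 1) - x 1 * (y 0 * z 2 - y 2 * z 0)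
      + x 2 * (y 0 * z 1 - y 1 * z 0) := by
  simp [Phi, vdet, Fin.sum_univ_succ, Matrix.det_fin_three, triples]
  ring

lemma finrank_span3 (v1 v2 v3 : V3)
    (h : LinearIndependent (ZMod 3) ![v1, v2, v3]) :
    Module.finrank (ZMod 3) (Submodule.span (ZMod 3) {v1, v2, v3}) = 3 := by
  have hr : Set.range ![v1, v2, v3] = {v1, v2, v3} := by
    ext w; simp [Matrix.range_cons, Matrix.range_empty]; tauto
  rw [← hr, finrank_span_eq_card h]
  simp

/-- The dual pair of Lagrangians of equation (6.3): both `L` and `L'` below are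
Lagrangians, `L ∩ L' = {0}`, and the alternating trilinear form given by the
determinant of the first three columns vanishes on both `L` and `L'`. -/
theorem example_dual_pair_trilinear_vanishes :
    IsLagrangian (Submodule.span (ZMod 3)
      {![0,0,0,1,1,1], ![0,1,-1,0,1,-1], ![1,1,1,0,0,0]}) ∧
    IsLagrangian (Submodule.span (ZMod 3)
      {![0,0,0,-1,1,1], ![0,1,-1,0,-1,1], ![-1,1,1,0,0,0]}) ∧
    (Submodule.span (ZMod 3)
        ({![0,0,0,1,1,1], ![0,1,-1,0,1,-1], ![1,1,1,0,0,0]} : Set V3)) ⊓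
      (Submodule.span (ZMod 3)
        ({![0,0,0,-1,1,1], ![0,1,-1,0,-1,1], ![-1,1,1,0,0,0]} : Set V3)) = ⊥ ∧
    (∀ x ∈ Submodule.span (ZMod 3)
        ({![0,0,0,1,1,1], ![0,1,-1,0,1,-1], ![1,1,1,0,0,0]} : Set V3),
      ∀ y ∈ Submodule.span (ZMod 3)
        ({![0,0,0,1,1,1], ![0,1,-1,0,1,-1], ![1,1,1,0,0,0]} : Set V3),
      ∀ z ∈ Submodule.span (ZMod 3)
        ({![0,0,0,1,1,1], ![0,1,-1,0,1,-1], ![1,1,1,0,0,0]} : Set V3),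
        Phi vdet x y z = 0) ∧
    (∀ x ∈ Submodule.span (ZMod 3)
        ({![0,0,0,-1,1,1], ![0,1,-1,0,-1,1], ![-1,1,1,0,0,0]} : Set V3),
      ∀ y ∈ Submodule.span (ZMod 3)
        ({![0,0,0,-1,1,1], ![0,1,-1,0,-1,1], ![-1,1,1,0,0,0]} : Set V3),
      ∀ z ∈ Submodule.span (ZMod 3)
        ({![0,0,0,-1,1,1], ![0,1,-1,0,-1,1], ![-1,1,1,0,0,0]} : Set V3),
        Phi vdet x y z = 0) := by
  refine ⟨⟨?_, ?_⟩, ⟨?_, ?_⟩, ?_, ?_, ?_⟩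
  · exact finrank_span3 _ _ _ (by rw [Fintype.linearIndependent_iff]; decide)
  · intro x hx y hy
    rw [mem_span3] at hx hy
    obtain ⟨a, b, c, rfl⟩ := hx
    obtain ⟨d, e, f, rfl⟩ := hy
    revert a b c d e f
    decide
  · exact finrank_span3 _ _ _ (by rw [Fintype.linearIndependent_iff]; decide)
  · intro x hx y hy
    rw [mem_span3] at hx hy
    obtain ⟨a, b, c, rfl⟩ := hx
    obtain ⟨d, e, f, rfl⟩ := hy
    revert a b c d e f
    decide
  · rw [eq_bot_iff]
    intro x hmem
    rw [Submodule.mem_inf] at hmem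
    obtain ⟨hx, hx'⟩ := hmem
    rw [mem_span3] at hx hx'
    obtain ⟨a, b, c, rfl⟩ := hx
    obtain ⟨d, e, f, hd⟩ := hx'
    rw [Submodule.mem_bot]
    revert hd
    revert a b c d e f
    decide
  · intro x hx y hy z hz
    rw [mem_span3] at hx hy hz
    obtain ⟨a, b, c, rfl⟩ := hx
    obtain ⟨d, e, f, rfl⟩ := hy
    obtain ⟨g, h, i, rfl⟩ := hz
    rw [Phi_vdet]
    simp only [Pi.add_apply, Pi.smul_apply, smul_eq_mul, Matrix.cons_val_zero,
      Matrix.cons_val_one, Matrix.head_cons, Matrix.cons_val_two, Matrix.tail_cons]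
    ring
  · intro x hx y hy z hz
    rw [mem_span3] at hx hy hz
    obtain ⟨a, b, c, rfl⟩ := hx
    obtain ⟨d, e, f, rfl⟩ := hy
    obtain ⟨g, h, i, rfl⟩ := hz
    rw [Phi_vdet]
    simp only [Pi.add_apply, Pi.smul_apply, smul_eq_mul, Matrix.cons_val_zero,
      Matrix.cons_val_one, Matrix.head_cons, Matrix.cons_val_two, Matrix.tail_cons]
    ring
end

section
/- For every v ∈ 𝔽₃^20 there exists a Lagrangian L ⊆ V = 𝔽₃^6 on which the alternating trilinear form Φ_v vanishes, i.e., Φ_v(x,y,z) = 0 for all x,y,z ∈ L. -/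
open Submodule
open scoped Matrix

namespace AlternatingMap

variable {R M ι : Type*} [CommRing R] [AddCommGroup M] [Module R M] [Finite ι]

theorem map_eq_zero_of_forall_mem_span (f : M [⋀^ι]→ₗ[R] R) {r : ι → M}
    (hr : LinearIndependent R r) (hf : f r = 0) {w : ι → M}
    (hw : ∀ i, w i ∈ span R (Set.range r)) : f w = 0 := by
  have hrestrict : f.compLinearMap (span R (Set.range r)).subtype = 0 :=
    (map_basis_eq_zero_iff (Module.Basis.span hr) _).1 (by simpa [Function.comp_def] using hf)
  simpa using congr($hrestrict fun i => ⟨w i, hw i⟩)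

end AlternatingMap

namespace LinearMap

variable {R M M' N : Type*} [CommRing R] [AddCommGroup M] [Module R M] [AddCommGroup M']
  [Module R M'] [AddCommGroup N] [Module R N]

theorem map₂_eq_zero_of_mem_span (B : M →ₗ[R] M' →ₗ[R] N) {s : Set M} {t : Set M'}
    (hB : ∀ x ∈ s, ∀ y ∈ t, B x y = 0) {x : M} {y : M'} (hx : x ∈ span R s)
    (hy : y ∈ span R t) : B x y = 0 := by
  have ht : ∀ x ∈ s, span R t ≤ ker (B x) := fun x hx => span_le.2 fun y hy => hB x hx y hy
  exact (span_le (p := ker (B.flip y))).2 (fun x hx => ht x hx hy) hx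

end LinearMap

def bformBilin : V3 →ₗ[ZMod 3] V3 →ₗ[ZMod 3] ZMod 3 :=
  LinearMap.mk₂ (ZMod 3) bform
    (fun _ _ _ => by simp only [bform, Pi.add_apply]; ring)
    (fun _ _ _ => by simp only [bform, Pi.smul_apply, smul_eq_mul]; ring)
    (fun _ _ _ => by simp only [bform, Pi.add_apply]; ring)
    (fun _ _ _ => by simp only [bform, Pi.smul_apply, smul_eq_mul]; ring)

theorem isLagrangian_span {r : Fin 3 → V3} (hr : LinearIndependent (ZMod 3) r)
    (hb : ∀ a b, bform (r a) (r b) = 0) : IsLagrangian (span (ZMod 3) (Set.range r)) := by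
  refine ⟨by simp [finrank_span_eq_card hr], fun x hx y hy => ?_⟩
  exact bformBilin.map₂_eq_zero_of_mem_span (by simpa [bformBilin] using hb) hx hy

def minor (j : Fin 20) : V3 [⋀^Fin 3]→ₗ[ZMod 3] ZMod 3 :=
  Matrix.detRowAlternating.compLinearMap (LinearMap.funLeft (ZMod 3) (ZMod 3) (triples j))

theorem minor_apply (j : Fin 20) (r : Fin 3 → V3) :
    minor j r = Matrix.det (Matrix.of fun a => r a ∘ triples j) := rfl

def phiAlternating (v : Fin 20 → ZMod 3) : V3 [⋀^Fin 3]→ₗ[ZMod 3] ZMod 3 := ∑ j, v j • minor j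

theorem phiAlternating_apply (v : Fin 20 → ZMod 3) (r : Fin 3 → V3) :
    phiAlternating v r = ∑ j, v j * minor j r :=
  map_sum (AddMonoidHom.mk' (fun f : V3 [⋀^Fin 3]→ₗ[ZMod 3] ZMod 3 => f r)
    fun f g => AlternatingMap.add_apply f g r) (fun j => v j • minor j) Finset.univ

theorem phi_eq_phiAlternating (v : Fin 20 → ZMod 3) (x y z : V3) :
    Phi v x y z = phiAlternating v ![x, y, z] := by
  rw [phiAlternating_apply]
  refine Finset.sum_congr rfl fun j _ => congrArg (v j * ·) (congrArg Matrix.det ?_)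
  ext a b; fin_cases a <;> rfl

def lagrangianBasis : Fin 13 → Fin 3 → V3 :=
  ![![![1, 0, 0, 0, 0, 1], ![0, 1, 0, 0, 1, 0], ![0, 0, 1, 2, 0, 0]],
    ![![1, 0, 0, 0, 0, 1], ![0, 1, 0, 0, 2, 0], ![0, 0, 1, 1, 0, 0]],
    ![![1, 0, 0, 0, 0, 1], ![0, 1, 0, 1, 0, 0], ![0, 0, 1, 0, 1, 0]],
    ![![1, 0, 0, 0, 0, 1], ![0, 1, 0, 2, 0, 0], ![0, 0, 1, 0, 2, 0]],
    ![![1, 0, 0, 0, 0, 2], ![0, 1, 0, 0, 1, 0], ![0, 0, 1, 1, 0, 0]],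
    ![![1, 0, 0, 0, 1, 0], ![0, 1, 0, 0, 0, 1], ![0, 0, 1, 1, 0, 0]],
    ![![1, 0, 0, 0, 2, 0], ![0, 1, 0, 0, 0, 2], ![0, 0, 1, 1, 0, 0]],
    ![![1, 0, 0, 1, 0, 0], ![0, 1, 0, 0, 1, 0], ![0, 0, 1, 0, 0, 1]],
    ![![1, 0, 0, 2, 0, 0], ![0, 1, 0, 0, 1, 0], ![0, 0, 1, 0, 0, 2]],
    ![![1, 0, 1, 0, 1, 2], ![0, 1, 1, 0, 2, 1], ![0, 0, 0, 1, 2, 2]],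
    ![![1, 0, 1, 0, 2, 2], ![0, 1, 2, 0, 2, 2], ![0, 0, 0, 1, 1, 2]],
    ![![1, 0, 2, 0, 1, 2], ![0, 1, 2, 0, 2, 1], ![0, 0, 0, 1, 1, 1]],
    ![![1, 0, 2, 0, 2, 2], ![0, 1, 1, 0, 2, 2], ![0, 0, 0, 1, 2, 1]]]

def pluckerCoords : Matrix (Fin 13) (Fin 6) (ZMod 3) :=
  Matrix.of ![![1, 0, 0, 0, 0, 0],
    ![1, 2, 0, 0, 0, 0],
    ![1, 1, 1, 0, 0, 0],
    ![1, 1, 2, 0, 0, 0],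
    ![1, 2, 0, 1, 0, 0],
    ![1, 2, 0, 2, 2, 0],
    ![1, 2, 0, 2, 1, 0],
    ![1, 1, 0, 2, 0, 1],
    ![1, 1, 0, 2, 0, 2],
    ![0, 1, 2, 1, 2, 2],
    ![0, 1, 1, 1, 1, 2],
    ![0, 1, 1, 1, 2, 1],
    ![0, 1, 2, 1, 1, 1]]

def pluckerBasis : Matrix (Fin 6) (Fin 20) (ZMod 3) :=
  Matrix.of ![![1, 2, 0, 0, 0, 2, 0, 1, 0, 0, 0, 0, 1, 0, 2, 0, 0, 0, 2, 1],
    ![0, 1, 0, 0, 0, 1, 0, 0, 0, 0, 0, 0, 0, 0, 1, 0, 0, 0, 1, 0],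
    ![0, 0, 1, 0, 2, 0, 0, 0, 0, 0, 0, 0, 0, 0, 0, 1, 0, 2, 0, 0],
    ![0, 0, 0, 0, 0, 1, 0, 1, 0, 0, 0, 0, 1, 0, 1, 0, 0, 0, 0, 0],
    ![0, 0, 0, 0, 0, 0, 1, 0, 1, 0, 0, 2, 0, 2, 0, 0, 0, 0, 0, 0],
    ![0, 0, 0, 1, 0, 0, 0, 0, 0, 1, 1, 0, 0, 0, 0, 0, 1, 0, 0, 0]]

theorem minor_lagrangianBasis :
    ∀ i j, minor j (lagrangianBasis i) = (pluckerCoords * pluckerBasis) i j := by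
  simp only [minor_apply, Matrix.det_fin_three]
  decide

theorem linearIndependent_lagrangianBasis (i : Fin 13) :
    LinearIndependent (ZMod 3) (lagrangianBasis i) := by
  obtain ⟨j, hj⟩ : ∃ j, minor j (lagrangianBasis i) ≠ 0 := by
    simp only [minor_lagrangianBasis]
    revert i; decide
  by_contra hdep
  exact hj ((minor j).map_linearDependent _ hdep)

theorem bform_lagrangianBasis :
    ∀ i a b, bform (lagrangianBasis i a) (lagrangianBasis i b) = 0 := by
  decide

theorem phiAlternating_lagrangianBasis (v : Fin 20 → ZMod 3) (i : Fin 13) :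
    phiAlternating v (lagrangianBasis i) = (pluckerCoords *ᵥ (pluckerBasis *ᵥ v)) i := by
  simp only [phiAlternating_apply, minor_lagrangianBasis, Matrix.mulVec_mulVec]
  simp only [Matrix.mulVec, dotProduct, mul_comm]

set_option maxRecDepth 10000 in
theorem exists_pluckerCoords_mulVec_eq_zero (t : Fin 6 → ZMod 3) :
    ∃ i, (pluckerCoords *ᵥ t) i = 0 := by
  revert t; decide

/-- For every `v ∈ 𝔽₃²⁰` there is a Lagrangian `L ⊆ 𝔽₃⁶` on which `Φ_v` vanishes. -/
theorem exists_lagrangian_phi_vanishes (v : Fin 20 → ZMod 3) :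
    ∃ L : Submodule (ZMod 3) V3, IsLagrangian L ∧
      ∀ x ∈ L, ∀ y ∈ L, ∀ z ∈ L, Phi v x y z = 0 := by
  obtain ⟨i, hi⟩ := exists_pluckerCoords_mulVec_eq_zero (pluckerBasis *ᵥ v)
  have hli := linearIndependent_lagrangianBasis i
  refine ⟨span (ZMod 3) (Set.range (lagrangianBasis i)),
    isLagrangian_span hli (bform_lagrangianBasis i), fun x hx y hy z hz => ?_⟩
  rw [phi_eq_phiAlternating]
  refine (phiAlternating v).map_eq_zero_of_forall_mem_span hli (by rwa [phiAlternating_lagrangianBasis]) ?_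
  intro a; fin_cases a <;> assumption
end
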